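/- Funk balls are convex: for any a ∈ interior C and ρ ∈ ℝ, the set {p ∈ interior C | F_C(a,p) ≤ ρ} is convex. -/

import Mathlib

/-!
For `p` in the interior of `C`, the set of `β` with `β • p - a ∈ C` is a closed, upward closed
half-line of positive numbers (positivity is where pointedness enters, via `a ≠ 0`). Hence
`F_C(a, p) ≤ ρ` exactly when `exp ρ • p - a ∈ C`, and the Funk ball is the intersection of the
convex sets `interior C` and `exp (-ρ) • (C + a)`.
-/

noncomputable def funk {d : ℕ} (C : Set (Fin d → ℝ)) (a b : Fin d → ℝ) : ℝ :=
  Real.log (sInf {β : ℝ | β • b - a ∈ C})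

open Set Filter Topology

section

variable {E : Type*} [AddCommGroup E] [Module ℝ E] {C : Set E} {a p : E}

theorem Convex.add_mem_of_smul_mem (hconv : Convex ℝ C)
    (hcone : ∀ β : ℝ, 0 ≤ β → ∀ x ∈ C, β • x ∈ C) {x y : E} (hx : x ∈ C) (hy : y ∈ C) :
    x + y ∈ C := by
  have hmid := hconv hx hy (by norm_num : (0 : ℝ) ≤ 1 / 2) (by norm_num : (0 : ℝ) ≤ 1 / 2)
    (by norm_num)
  convert hcone 2 zero_le_two _ hmid using 1
  module

theorem Convex.setOf_smul_sub_mem (hconv : Convex ℝ C) (c : ℝ) (a : E) :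
    Convex ℝ {p | c • p - a ∈ C} := by
  intro x hx y hy t s ht hs hts
  show c • (t • x + s • y) - a ∈ C
  convert hconv hx hy ht hs hts using 1
  calc c • (t • x + s • y) - a = c • (t • x + s • y) - (t + s) • a := by rw [hts, one_smul]
    _ = t • (c • x - a) + s • (c • y - a) := by module

theorem smul_sub_mem_of_le (hconv : Convex ℝ C)
    (hcone : ∀ β : ℝ, 0 ≤ β → ∀ x ∈ C, β • x ∈ C) (hp : p ∈ C) {β γ : ℝ}
    (hβ : β • p - a ∈ C) (hβγ : β ≤ γ) : γ • p - a ∈ C := by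
  convert hconv.add_mem_of_smul_mem hcone hβ (hcone (γ - β) (sub_nonneg.2 hβγ) p hp) using 1
  module

theorem pos_of_smul_sub_mem (hconv : Convex ℝ C)
    (hcone : ∀ β : ℝ, 0 ≤ β → ∀ x ∈ C, β • x ∈ C) (hpointed : C ∩ (-C) ⊆ {0})
    (ha : a ∈ C) (ha0 : a ≠ 0) (hp : p ∈ C) {β : ℝ} (hβ : β • p - a ∈ C) : 0 < β := by
  by_contra! hβ0
  have hneg : -a ∈ C := by
    convert hconv.add_mem_of_smul_mem hcone hβ (hcone (-β) (neg_nonneg.2 hβ0) p hp) using 1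
    module
  exact ha0 (hpointed ⟨ha, by rwa [Set.mem_neg]⟩)

variable [TopologicalSpace E] [IsTopologicalAddGroup E] [ContinuousSMul ℝ E]

theorem ne_zero_of_mem_interior [Nontrivial E] (hpointed : C ∩ (-C) ⊆ {0})
    (ha : a ∈ interior C) : a ≠ 0 := by
  rintro rfl
  have hC : C ∈ 𝓝 (0 : E) := mem_interior_iff_mem_nhds.1 ha
  have hnegC : -C ∈ 𝓝 (0 : E) := by simpa using neg_mem_nhds_zero E hC
  have : ({0} : Set E) ∈ 𝓝 0 := mem_of_superset (inter_mem hC hnegC) hpointed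
  simpa [interior_singleton] using mem_interior_iff_mem_nhds.2 this

theorem exists_smul_sub_mem (hcone : ∀ β : ℝ, 0 ≤ β → ∀ x ∈ C, β • x ∈ C)
    (hp : p ∈ interior C) (a : E) : ∃ β : ℝ, β • p - a ∈ C := by
  have hcont : Continuous fun t : ℝ => p - t • a := by fun_prop
  have hnhds : ∀ᶠ t in 𝓝[>] (0 : ℝ), p - t • a ∈ C := by
    refine nhdsWithin_le_nhds (hcont.continuousAt.preimage_mem_nhds ?_)
    simpa using mem_interior_iff_mem_nhds.1 hp
  obtain ⟨t, ht, ht0⟩ := (hnhds.and self_mem_nhdsWithin).exists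
  refine ⟨t⁻¹, ?_⟩
  convert hcone t⁻¹ (inv_nonneg.2 ht0.le) _ ht using 1
  rw [smul_sub, smul_smul, inv_mul_cancel₀ ht0.ne', one_smul]

theorem log_sInf_smul_sub_mem_le_iff (hconv : Convex ℝ C) (hclosed : IsClosed C)
    (hcone : ∀ β : ℝ, 0 ≤ β → ∀ x ∈ C, β • x ∈ C) (hpointed : C ∩ (-C) ⊆ {0})
    (ha : a ∈ C) (ha0 : a ≠ 0) (hp : p ∈ interior C) (ρ : ℝ) :
    Real.log (sInf {β : ℝ | β • p - a ∈ C}) ≤ ρ ↔ Real.exp ρ • p - a ∈ C := by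
  set S := {β : ℝ | β • p - a ∈ C}
  have hpos : ∀ β ∈ S, 0 < β := fun β hβ ↦
    pos_of_smul_sub_mem hconv hcone hpointed ha ha0 (interior_subset hp) hβ
  have hbdd : BddBelow S := ⟨0, fun β hβ ↦ (hpos β hβ).le⟩
  have hmin : sInf S ∈ S :=
    (hclosed.preimage (by fun_prop)).csInf_mem (exists_smul_sub_mem hcone hp a) hbdd
  rw [Real.log_le_iff_le_exp (hpos _ hmin)]
  exact ⟨smul_sub_mem_of_le hconv hcone (interior_subset hp) hmin, fun h ↦ csInf_le hbdd h⟩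

end

theorem funk_ball_convex_general {d : ℕ} (C : Set (Fin d → ℝ))
    (hconv : Convex ℝ C) (hclosed : IsClosed C)
    (hcone : ∀ β : ℝ, 0 ≤ β → ∀ x ∈ C, β • x ∈ C)
    (hpointed : C ∩ (-C) ⊆ {0})
    (a : Fin d → ℝ) (ha : a ∈ interior C) (ρ : ℝ) :
    Convex ℝ {p | p ∈ interior C ∧ funk C a p ≤ ρ} := by
  rcases subsingleton_or_nontrivial (Fin d → ℝ) with _ | _
  · exact subsingleton_of_subsingleton.convex
  have ha0 := ne_zero_of_mem_interior hpointed ha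
  have hball :
      {p | p ∈ interior C ∧ funk C a p ≤ ρ} = interior C ∩ {p | Real.exp ρ • p - a ∈ C} :=
    ext fun p ↦ and_congr_right fun hp ↦
      log_sInf_smul_sub_mem_le_iff hconv hclosed hcone hpointed (interior_subset ha) ha0 hp ρ
  rw [hball]
  exact hconv.interior.inter (hconv.setOf_smul_sub_mem _ a)

theorem funk_ball_convex {d : ℕ} (C : Set (Fin d → ℝ))
    (hconv : Convex ℝ C) (hclosed : IsClosed C)
    (hcone : ∀ β : ℝ, 0 ≤ β → ∀ x ∈ C, β • x ∈ C)
    (hpointed : C ∩ (-C) ⊆ {0})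
    (hint : (interior C).Nonempty)
    (a : Fin d → ℝ) (ha : a ∈ interior C) (ρ : ℝ) :
    Convex ℝ {p | p ∈ interior C ∧ funk C a p ≤ ρ} :=
  funk_ball_convex_general C hconv hclosed hcone hpointed a ha ρ
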